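/- Let $\omega \in A_1$ and let $b$ be locally integrable. Suppose there are constants $M > 0$ and $1 < p < \infty$ such that for every cube $Q = Q(x_0, r)$, with $Q' = Q(x_0 + r z_1, r)$ a fixed translate (where $z_1 \in \mathbb{R}^n$ is a fixed vector with $|z_1|$ large), one has $\sup_{\lambda>0} \lambda\,\omega(\{x \in Q : |b(x) - b_{Q'}| > \lambda\,\omega(x)\})^{1/p} \leq M\,\omega(Q)^{1/p}$. Then: (a) $|b_Q - b_{Q'}| \leq C\,\frac{\omega(Q)}{|Q|}\,M$ for every cube $Q$, and (b) $\sup_Q \sup_{\lambda>0} \frac{\lambda}{\omega(Q)^{1/p}}\,\omega(\{x \in Q : |b(x)-b_Q| > \lambda\,\omega(x)\})^{1/p} \leq C\,M$, with $C$ depending only on $n$, $p$, $[\omega]_{A_1}$. -/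

import Mathlib

open MeasureTheory Real
noncomputable section

abbrev Rn (n : ℕ) := EuclideanSpace ℝ (Fin n)

def cube {n : ℕ} (c : Rn n) (r : ℝ) : Set (Rn n) := {y | ∀ i, |y i - c i| ≤ r / 2}

def wMeas {n : ℕ} (ω : Rn n → ℝ) (S : Set (Rn n)) : ℝ := ∫ x in S, ω x

def avg {n : ℕ} (f : Rn n → ℝ) (c : Rn n) (r : ℝ) : ℝ := (∫ x in cube c r, f x) / r ^ n

def IsA1 {n : ℕ} (ω : Rn n → ℝ) (A : ℝ) : Prop :=
  (∀ x, 0 < ω x) ∧ LocallyIntegrable ω volume ∧ 1 ≤ A ∧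
  ∀ (c : Rn n) (r : ℝ), 0 < r →
    ∀ᵐ x ∂(volume : Measure (Rn n)), x ∈ cube c r → wMeas ω (cube c r) / r ^ n ≤ A * ω x

def IsAp {n : ℕ} (ω : Rn n → ℝ) (p A : ℝ) : Prop :=
  (∀ x, 0 < ω x) ∧ LocallyIntegrable ω volume ∧
  ∀ (c : Rn n) (r : ℝ), 0 < r →
    (wMeas ω (cube c r) / r ^ n) *
      ((∫ x in cube c r, ω x ^ (-(1 / (p - 1)))) / r ^ n) ^ (p - 1) ≤ A

def IsAinf {n : ℕ} (ω : Rn n → ℝ) : Prop := ∃ p A, 1 < p ∧ IsAp ω p A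

/-!  auxiliary lemmas -/
open Set
open scoped NNReal ENNReal

lemma cube_eq {n : ℕ} (c : Rn n) (r : ℝ) :
    cube c r = (MeasurableEquiv.toLp 2 (Fin n → ℝ)).symm ⁻¹'
      (Set.univ.pi fun i => Icc (c i - r/2) (c i + r/2)) := by
  ext y
  simp only [cube, Set.mem_preimage, Set.mem_pi, Set.mem_univ, forall_true_left, mem_Icc,
    Set.mem_setOf_eq, MeasurableEquiv.toLp_symm_apply, MeasurableEquiv.coe_toLp_symm, abs_le]
  constructor
  · intro h i; have := h i; constructor <;> linarith [this.1, this.2]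
  · intro h i; have := h i; constructor <;> linarith [this.1, this.2]

lemma volume_cube {n : ℕ} (c : Rn n) (r : ℝ) (hr : 0 ≤ r) :
    volume (cube c r) = ENNReal.ofReal (r ^ n) := by
  rw [cube_eq]
  rw [(EuclideanSpace.volume_preserving_symm_measurableEquiv_toLp (Fin n)).measure_preimage
    (MeasurableSet.univ_pi fun i => measurableSet_Icc).nullMeasurableSet]
  rw [volume_pi_pi]
  have : ∀ i : Fin n, volume (Icc (c i - r/2) (c i + r/2)) = ENNReal.ofReal r := by
    intro i; rw [Real.volume_Icc]; congr 1; ring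
  simp only [this, Finset.prod_const, Finset.card_univ, Fintype.card_fin,
    ← ENNReal.ofReal_pow hr]

lemma measurableSet_cube {n : ℕ} (c : Rn n) (r : ℝ) : MeasurableSet (cube c r) := by
  rw [cube_eq]
  exact (MeasurableEquiv.toLp 2 (Fin n → ℝ)).symm.measurable
    (MeasurableSet.univ_pi fun i => measurableSet_Icc)

lemma isCompact_cube {n : ℕ} (c : Rn n) (r : ℝ) : IsCompact (cube c r) := by
  rw [cube_eq]
  have hc : IsCompact (Set.univ.pi fun i : Fin n => Icc (c i - r/2) (c i + r/2)) :=
    isCompact_univ_pi fun i => isCompact_Icc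
  have : (MeasurableEquiv.toLp 2 (Fin n → ℝ)).symm ⁻¹'
      (Set.univ.pi fun i => Icc (c i - r/2) (c i + r/2)) =
      (EuclideanSpace.equiv (Fin n) ℝ).symm '' (Set.univ.pi fun i => Icc (c i - r/2) (c i + r/2)) := by
    ext y
    simp only [Set.mem_preimage, Set.mem_image]
    constructor
    · intro h; exact ⟨_, h, rfl⟩
    · rintro ⟨z, hz, rfl⟩; exact hz
  rw [this]
  exact hc.image (EuclideanSpace.equiv (Fin n) ℝ).symm.continuous

lemma wMeas_nonneg {n : ℕ} {ω : Rn n → ℝ} (hω : ∀ x, 0 ≤ ω x) (S : Set (Rn n)) :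
    0 ≤ wMeas ω S := integral_nonneg fun x => hω x

lemma wMeas_mono {n : ℕ} {ω : Rn n → ℝ} (hω : ∀ x, 0 ≤ ω x) {S T : Set (Rn n)}
    (hT : IntegrableOn ω T volume) (hST : S ≤ᵐ[volume] T) :
    wMeas ω S ≤ wMeas ω T :=
  setIntegral_mono_set hT (Filter.Eventually.of_forall fun x => hω x) hST

lemma core {n : ℕ} {p M : ℝ} (hp : 1 < p) (hM : 0 < M)
    {ω b : Rn n → ℝ} (hωm : Measurable ω) (hbm : Measurable b)
    (hωpos : ∀ x, 0 < ω x) {c : Rn n} {r : ℝ} (hr : 0 < r) (β : ℝ)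
    (hωint : IntegrableOn ω (cube c r) volume)
    (hbint : IntegrableOn b (cube c r) volume)
    (hweak : ∀ l : ℝ, 0 < l →
      l * (wMeas ω {x ∈ cube c r | l * ω x < |b x - β|}) ^ (1/p) ≤
        M * (wMeas ω (cube c r)) ^ (1/p)) :
    ∫ x in cube c r, |b x - β| ≤ (1 + 1/(p-1)) * M * wMeas ω (cube c r) := by
  have hp0 : (0:ℝ) < p := by linarith
  have hp1 : (0:ℝ) < p - 1 := by linarith
  set Q := cube c r with hQ
  have hQm : MeasurableSet Q := measurableSet_cube c r
  have hQvol : volume Q < ⊤ := by rw [volume_cube c r hr.le]; exact ENNReal.ofReal_lt_top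
  set wQ := wMeas ω Q with hwQ
  have hwQ0 : 0 ≤ wQ := wMeas_nonneg (fun x => (hωpos x).le) Q
  have hb_abs : IntegrableOn (fun x => |b x - β|) Q volume :=
    (hbint.sub (integrableOn_const hQvol.ne)).abs
  -- Chebyshev
  have cheb : ∀ t : ℝ, 0 < t →
      wMeas ω {x ∈ Q | t * ω x < |b x - β|} ≤ M ^ p * wQ / t ^ p := by
    intro t ht
    have h1 := hweak t ht
    have hS0 : 0 ≤ wMeas ω {x ∈ Q | t * ω x < |b x - β|} :=
      wMeas_nonneg (fun x => (hωpos x).le) _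
    have h2 := Real.rpow_le_rpow
      (mul_nonneg ht.le (Real.rpow_nonneg hS0 _)) h1 hp0.le
    rw [Real.mul_rpow ht.le (Real.rpow_nonneg hS0 _),
      Real.mul_rpow hM.le (Real.rpow_nonneg hwQ0 _),
      ← Real.rpow_mul hS0, ← Real.rpow_mul hwQ0, one_div_mul_cancel hp0.ne',
      Real.rpow_one, Real.rpow_one] at h2
    rw [le_div_iff₀ (Real.rpow_pos_of_pos ht p)]
    linarith [mul_comm (t ^ p) (wMeas ω {x ∈ Q | t * ω x < |b x - β|})]
  -- layer cake setup
  set dens : Rn n → ℝ≥0 := fun x => (ω x).toNNReal with hdensdef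
  have hdens : Measurable dens := continuous_real_toNNReal.measurable.comp hωm
  set ν : Measure (Rn n) := (volume.restrict Q).withDensity (fun x => (dens x : ℝ≥0∞)) with hν
  set g : Rn n → ℝ := fun x => |b x - β| / ω x with hg
  have hsmul : (fun x => dens x • g x) = fun x => |b x - β| := by
    funext x
    simp only [hdensdef, hg, NNReal.smul_def, Real.coe_toNNReal _ (hωpos x).le, smul_eq_mul]
    rw [mul_comm]; exact div_mul_cancel₀ _ (hωpos x).ne'
  have hgm : Measurable g := ((hbm.sub measurable_const).abs).div hωm
  have hgi : Integrable g ν := by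
    rw [hν, integrable_withDensity_iff_integrable_smul hdens]
    rw [hsmul]; exact hb_abs
  have hgnn : 0 ≤ᵐ[ν] g :=
    Filter.Eventually.of_forall fun x => div_nonneg (abs_nonneg _) (hωpos x).le
  have key : ∫ x, g x ∂ν = ∫ t in Ioi (0:ℝ), ((ν {a | t < g a}).toReal) :=
    hgi.integral_eq_integral_meas_lt hgnn
  have hint : ∫ x, g x ∂ν = ∫ x in Q, |b x - β| := by
    rw [hν, integral_withDensity_eq_integral_smul hdens, hsmul]
  -- identify the measure of superlevel sets
  have hνset : ∀ t : ℝ, 0 < t →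
      (ν {a | t < g a}).toReal = wMeas ω {x ∈ Q | t * ω x < |b x - β|} := by
    intro t ht
    have hEm : MeasurableSet {a | t < g a} := measurableSet_lt measurable_const hgm
    have hseteq : {a | t < g a} ∩ Q = {x ∈ Q | t * ω x < |b x - β|} := by
      ext x
      simp only [mem_inter_iff, mem_setOf_eq, hg]
      rw [lt_div_iff₀ (hωpos x), and_comm]
    have hSsub : {x ∈ Q | t * ω x < |b x - β|} ⊆ Q := sep_subset _ _
    have hSint : IntegrableOn ω {x ∈ Q | t * ω x < |b x - β|} volume :=
      hωint.mono_set hSsub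
    rw [hν, withDensity_apply _ hEm, Measure.restrict_restrict hEm, hseteq]
    have : (fun x => (dens x : ℝ≥0∞)) = fun x => ENNReal.ofReal (ω x) := rfl
    rw [this, ← ofReal_integral_eq_lintegral_ofReal hSint
      (Filter.Eventually.of_forall fun x => (hωpos x).le)]
    rw [ENNReal.toReal_ofReal (integral_nonneg fun x => (hωpos x).le)]
    rfl
  -- the dominating function
  set h : ℝ → ℝ := fun t => if t ≤ M then wQ else M ^ p * wQ / t ^ p with hhdef
  have hIoi : Ioi (0:ℝ) = Ioc 0 M ∪ Ioi M := (Ioc_union_Ioi_eq_Ioi hM.le).symm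
  have hEqOn1 : EqOn h (fun _ => wQ) (Ioc 0 M) := by
    intro t htm; simp only [hhdef, if_pos htm.2]
  have hEqOn2 : EqOn h (fun t => M ^ p * wQ * t ^ (-p)) (Ioi M) := by
    intro t htm
    have htpos : (0:ℝ) < t := hM.trans htm
    simp only [hhdef, if_neg (not_le.2 (show M < t from htm)), Real.rpow_neg htpos.le, div_eq_mul_inv]
  have hint1 : IntegrableOn h (Ioc 0 M) volume :=
    (integrableOn_const (by rw [Real.volume_Ioc]; exact ENNReal.ofReal_ne_top)).congr_fun
      hEqOn1.symm measurableSet_Ioc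
  have hint2 : IntegrableOn h (Ioi M) volume :=
    IntegrableOn.congr_fun
      (Integrable.const_mul (integrableOn_Ioi_rpow_of_lt (by linarith) hM) (M ^ p * wQ))
      hEqOn2.symm measurableSet_Ioi
  have hhint : IntegrableOn h (Ioi 0) volume := by
    rw [hIoi]; exact hint1.union hint2
  -- monotonicity
  have hmono : ∫ t in Ioi (0:ℝ), ((ν {a | t < g a}).toReal) ≤ ∫ t in Ioi (0:ℝ), h t := by
    refine integral_mono_of_nonneg
      (Filter.Eventually.of_forall fun t => ENNReal.toReal_nonneg) hhint ?_
    rw [Filter.EventuallyLE, ae_restrict_iff' measurableSet_Ioi]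
    refine Filter.Eventually.of_forall fun t ht => ?_
    have ht0 : (0:ℝ) < t := ht
    rw [hνset t ht0]
    by_cases htM : t ≤ M
    · rw [hhdef]; simp only [if_pos htM]
      exact wMeas_mono (fun x => (hωpos x).le) hωint
        (HasSubset.Subset.eventuallyLE (sep_subset _ _))
    · rw [hhdef]; simp only [if_neg htM]
      exact cheb t ht0
  -- compute the integral of h
  have hsplit : ∫ t in Ioi (0:ℝ), h t = (∫ t in Ioc (0:ℝ) M, h t) + ∫ t in Ioi M, h t := by
    rw [hIoi]
    exact setIntegral_union (Ioc_disjoint_Ioi le_rfl) measurableSet_Ioi hint1 hint2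
  have hI1 : ∫ t in Ioc (0:ℝ) M, h t = M * wQ := by
    rw [setIntegral_congr_fun measurableSet_Ioc hEqOn1, setIntegral_const, measureReal_def, Real.volume_Ioc,
      sub_zero, ENNReal.toReal_ofReal hM.le, smul_eq_mul]
  have hI2 : ∫ t in Ioi M, h t = M * wQ * (1/(p-1)) := by
    rw [setIntegral_congr_fun measurableSet_Ioi hEqOn2, integral_const_mul,
      integral_Ioi_rpow_of_lt (by linarith) hM,
      show (-p + 1 : ℝ) = -(p - 1) by ring, neg_div_neg_eq]
    have hMM : M ^ p * M ^ (-(p - 1)) = M := by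
      rw [← Real.rpow_add hM, show p + -(p - 1) = 1 by ring, Real.rpow_one]
    calc M ^ p * wQ * (M ^ (-(p - 1)) / (p - 1))
        = (M ^ p * M ^ (-(p - 1))) * wQ / (p - 1) := by ring
      _ = M * wQ * (1 / (p - 1)) := by rw [hMM]; ring
  calc ∫ x in Q, |b x - β| = ∫ t in Ioi (0:ℝ), ((ν {a | t < g a}).toReal) := by
        rw [← hint, key]
    _ ≤ ∫ t in Ioi (0:ℝ), h t := hmono
    _ = M * wQ + M * wQ * (1/(p-1)) := by rw [hsplit, hI1, hI2]
    _ = (1 + 1/(p-1)) * M * wQ := by ring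

lemma parta {n : ℕ} {p M : ℝ} (hp : 1 < p) (hM : 0 < M)
    {ω b : Rn n → ℝ} (hωm : Measurable ω) (hbm : Measurable b)
    (hωpos : ∀ x, 0 < ω x) {c : Rn n} {r : ℝ} (hr : 0 < r) (β : ℝ)
    (hωint : IntegrableOn ω (cube c r) volume)
    (hbint : IntegrableOn b (cube c r) volume)
    (hweak : ∀ l : ℝ, 0 < l →
      l * (wMeas ω {x ∈ cube c r | l * ω x < |b x - β|}) ^ (1/p) ≤
        M * (wMeas ω (cube c r)) ^ (1/p)) :
    |avg b c r - β| ≤ (1 + 1/(p-1)) * M * wMeas ω (cube c r) / r ^ n := by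
  have hcore := core hp hM hωm hbm hωpos hr β hωint hbint hweak
  have hrn : (0:ℝ) < r ^ n := pow_pos hr n
  have hQvol : volume (cube c r) < ⊤ := by
    rw [volume_cube c r hr.le]; exact ENNReal.ofReal_lt_top
  have hvol : (volume (cube c r)).toReal = r ^ n := by
    rw [volume_cube c r hr.le, ENNReal.toReal_ofReal hrn.le]
  have hsub : ∫ x in cube c r, (b x - β) = (∫ x in cube c r, b x) - β * r ^ n := by
    rw [integral_sub hbint (integrableOn_const hQvol.ne), setIntegral_const, measureReal_def,
      hvol, smul_eq_mul, mul_comm]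
  have h1 : |avg b c r - β| = |∫ x in cube c r, (b x - β)| / r ^ n := by
    rw [hsub, avg]
    have : (∫ x in cube c r, b x) / r ^ n - β
        = ((∫ x in cube c r, b x) - β * r ^ n) / r ^ n := by
      field_simp
    rw [this, abs_div, abs_of_pos hrn]
  have h2 : |∫ x in cube c r, (b x - β)| ≤ ∫ x in cube c r, |b x - β| := by
    simpa [Real.norm_eq_abs] using
      norm_integral_le_integral_norm (μ := volume.restrict (cube c r)) (fun x => b x - β)
  rw [h1]
  gcongr
  exact h2.trans hcore

/-- converting weak-type oscillation control against the average over the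
translated cube `Q' = Q(x₀ + r z₁, r)` into (a) control of `|b_Q - b_{Q'}|` and (b) genuine
weighted weak-type BMO control against `b_Q`. -/
theorem stmt15 (n : ℕ) (p A : ℝ) (hp : 1 < p) (hA : 1 ≤ A) :
    ∃ C : ℝ, 0 < C ∧
      ∀ (z₁ : Rn n) (ω b : Rn n → ℝ) (M : ℝ),
        2 * Real.sqrt n < ‖z₁‖ →  -- `|z₁|` large
        IsA1 ω A → LocallyIntegrable b volume → 0 < M →
        -- weak-type oscillation control against `b_{Q'}`
        (∀ (c : Rn n) (r : ℝ), 0 < r → ∀ l : ℝ, 0 < l →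
            l * (wMeas ω {x ∈ cube c r | l * ω x < |b x - avg b (c + r • z₁) r|}) ^ (1 / p) ≤
              M * (wMeas ω (cube c r)) ^ (1 / p)) →
        -- (a) `|b_Q - b_{Q'}| ≤ C (ω(Q)/|Q|) M`
        ((∀ (c : Rn n) (r : ℝ), 0 < r →
            |avg b c r - avg b (c + r • z₁) r| ≤ C * (wMeas ω (cube c r) / r ^ n) * M) ∧
        -- (b) weak-type BMO control against `b_Q`
        (∀ (c : Rn n) (r : ℝ), 0 < r → ∀ l : ℝ, 0 < l →
            l * (wMeas ω {x ∈ cube c r | l * ω x < |b x - avg b c r|}) ^ (1 / p) ≤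
              C * M * (wMeas ω (cube c r)) ^ (1 / p))) := by
  have hp1 : (0:ℝ) < p - 1 := by linarith
  set K : ℝ := 1 + 1/(p-1) with hKdef
  have hK1 : 1 ≤ K := by
    rw [hKdef]
    have : 0 < 1/(p-1) := by positivity
    linarith
  have hK0 : 0 < K := by linarith
  have hA0 : (0:ℝ) < A := by linarith
  refine ⟨2*K*A + 2, by positivity, ?_⟩
  intro z₁ ω b M hz hω hb hM hweak
  obtain ⟨hωpos, hωloc, -, hA1ae⟩ := hω
  -- measurable representatives
  obtain ⟨ω₀, hω₀m, hω₀e⟩ : ∃ ω₀ : Rn n → ℝ, Measurable ω₀ ∧ ω =ᵐ[volume] ω₀ := by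
    have hsm := hωloc.aestronglyMeasurable
    exact ⟨hsm.mk ω, hsm.stronglyMeasurable_mk.measurable, hsm.ae_eq_mk⟩
  obtain ⟨b', hb'm, hbe⟩ : ∃ b' : Rn n → ℝ, Measurable b' ∧ b =ᵐ[volume] b' := by
    have hsm := hb.aestronglyMeasurable
    exact ⟨hsm.mk b, hsm.stronglyMeasurable_mk.measurable, hsm.ae_eq_mk⟩
  set ω' : Rn n → ℝ := fun x => if 0 < ω₀ x then ω₀ x else 1 with hω'def
  have hω'm : Measurable ω' :=
    Measurable.ite (measurableSet_lt measurable_const hω₀m) hω₀m measurable_const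
  have hω'pos : ∀ x, 0 < ω' x := by
    intro x; by_cases h : 0 < ω₀ x <;> simp [hω'def, h]
  have hωe : ω =ᵐ[volume] ω' := by
    filter_upwards [hω₀e] with x hx
    have h0 : 0 < ω₀ x := hx ▸ hωpos x
    rw [hω'def]; simp only [if_pos h0]; exact hx
  -- transfer facts
  have hwe : ∀ S : Set (Rn n), wMeas ω S = wMeas ω' S := fun S =>
    integral_congr_ae (ae_restrict_of_ae hωe)
  have havg : ∀ (c : Rn n) (r : ℝ), avg b c r = avg b' c r := fun c r => by
    unfold avg; rw [integral_congr_ae (ae_restrict_of_ae hbe)]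
  have hsete : ∀ (c : Rn n) (r l β : ℝ),
      {x ∈ cube c r | l * ω x < |b x - β|} =ᵐ[volume]
        {x ∈ cube c r | l * ω' x < |b' x - β|} := by
    intro c r l β
    rw [Filter.eventuallyEq_set]
    filter_upwards [hωe, hbe] with x h1 h2
    simp only [Set.mem_setOf_eq, h1, h2]
  have hwsete : ∀ (c : Rn n) (r l β : ℝ),
      wMeas ω {x ∈ cube c r | l * ω x < |b x - β|} =
        wMeas ω' {x ∈ cube c r | l * ω' x < |b' x - β|} := by
    intro c r l β
    rw [hwe]; exact setIntegral_congr_set (hsete c r l β)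
  have hω'int : ∀ (c : Rn n) (r : ℝ), IntegrableOn ω' (cube c r) volume := fun c r =>
    (hωloc.integrableOn_isCompact (isCompact_cube c r)).congr (ae_restrict_of_ae hωe)
  have hb'int : ∀ (c : Rn n) (r : ℝ), IntegrableOn b' (cube c r) volume := fun c r =>
    (hb.integrableOn_isCompact (isCompact_cube c r)).congr (ae_restrict_of_ae hbe)
  have hA1' : ∀ (c : Rn n) (r : ℝ), 0 < r →
      ∀ᵐ x ∂(volume : Measure (Rn n)), x ∈ cube c r →
        wMeas ω' (cube c r) / r ^ n ≤ A * ω' x := by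
    intro c r hr
    filter_upwards [hA1ae c r hr, hωe] with x hx he hmem
    rw [← hwe, ← he]
    exact hx hmem
  have hweak' : ∀ (c : Rn n) (r : ℝ), 0 < r → ∀ l : ℝ, 0 < l →
      l * (wMeas ω' {x ∈ cube c r | l * ω' x < |b' x - avg b' (c + r • z₁) r|}) ^ (1/p) ≤
        M * (wMeas ω' (cube c r)) ^ (1/p) := by
    intro c r hr l hl
    have h1 : wMeas ω' {x ∈ cube c r | l * ω' x < |b' x - avg b' (c + r • z₁) r|} =
        wMeas ω {x ∈ cube c r | l * ω x < |b x - avg b (c + r • z₁) r|} := by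
      rw [havg]; exact (hwsete c r l _).symm
    rw [h1, ← hwe]
    exact hweak c r hr l hl
  -- part (a) bound, in primed terms
  have haK : ∀ (c : Rn n) (r : ℝ), 0 < r →
      |avg b' c r - avg b' (c + r • z₁) r| ≤ K * M * wMeas ω' (cube c r) / r ^ n :=
    fun c r hr => parta hp hM hω'm hb'm hω'pos hr _ (hω'int c r) (hb'int c r)
      (fun l hl => hweak' c r hr l hl)
  constructor
  · -- part (a)
    intro c r hr
    rw [havg, havg]
    refine (haK c r hr).trans ?_
    rw [hwe]
    have hd : 0 ≤ wMeas ω' (cube c r) / r ^ n :=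
      div_nonneg (wMeas_nonneg (fun x => (hω'pos x).le) _) (pow_nonneg hr.le n)
    have hKC : K ≤ 2*K*A + 2 := by nlinarith
    calc K * M * wMeas ω' (cube c r) / r ^ n
        = K * ((wMeas ω' (cube c r) / r ^ n) * M) := by ring
      _ ≤ (2*K*A + 2) * ((wMeas ω' (cube c r) / r ^ n) * M) := by
          exact mul_le_mul_of_nonneg_right hKC (mul_nonneg hd hM.le)
      _ = (2*K*A + 2) * (wMeas ω' (cube c r) / r ^ n) * M := by ring
  · -- part (b)
    intro c r hr l hl
    have hseteq2 : wMeas ω {x ∈ cube c r | l * ω x < |b x - avg b c r|} =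
        wMeas ω' {x ∈ cube c r | l * ω' x < |b' x - avg b' c r|} := by
      rw [havg]; exact hwsete c r l _
    rw [hseteq2, hwe (cube c r)]
    set Q := cube c r with hQdef
    set wQ := wMeas ω' Q with hwQdef
    have hwQ0 : 0 ≤ wQ := wMeas_nonneg (fun x => (hω'pos x).le) _
    have hwQp : 0 ≤ wQ ^ (1/p) := Real.rpow_nonneg hwQ0 _
    set a : ℝ := avg b' c r with hadef
    set β : ℝ := avg b' (c + r • z₁) r with hβdef
    set T : Set (Rn n) := {x ∈ Q | l * ω' x < |b' x - a|} with hTdef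
    have hT0 : 0 ≤ wMeas ω' T := wMeas_nonneg (fun x => (hω'pos x).le) _
    have hab := haK c r hr
    by_cases hcase : l ≤ 2*K*A*M
    · have h1 : wMeas ω' T ≤ wQ :=
        wMeas_mono (fun x => (hω'pos x).le) (hω'int c r)
          (HasSubset.Subset.eventuallyLE (Set.sep_subset _ _))
      have h2 : (wMeas ω' T) ^ (1/p) ≤ wQ ^ (1/p) :=
        Real.rpow_le_rpow hT0 h1 (by positivity)
      calc l * (wMeas ω' T) ^ (1/p) ≤ (2*K*A*M) * wQ ^ (1/p) :=
            mul_le_mul hcase h2 (Real.rpow_nonneg hT0 _) (by positivity)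
        _ ≤ (2*K*A + 2) * M * wQ ^ (1/p) := by
            nlinarith [mul_nonneg hM.le hwQp]
    · push_neg at hcase
      set S : Set (Rn n) := {x ∈ Q | (l/2) * ω' x < |b' x - β|} with hSdef
      have hS0 : 0 ≤ wMeas ω' S := wMeas_nonneg (fun x => (hω'pos x).le) _
      have hsub : T ≤ᵐ[volume] S := by
        filter_upwards [hA1' c r hr] with x hx
        intro hxT
        obtain ⟨hxQ, hlt⟩ := hxT
        have h3 : wQ / r ^ n ≤ A * ω' x := hx hxQ
        have h4 : |a - β| ≤ K * M * (A * ω' x) := by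
          refine hab.trans ?_
          rw [mul_div_assoc]
          exact mul_le_mul_of_nonneg_left h3 (by positivity)
        have h5 : K * M * A ≤ l / 2 := by
          rw [show K * M * A = (2*K*A*M)/2 by ring]
          gcongr
          all_goals exact hcase.le
        have h6 : (K * M * A) * ω' x ≤ (l / 2) * ω' x :=
          mul_le_mul_of_nonneg_right h5 (hω'pos x).le
        refine ⟨hxQ, ?_⟩
        have h7 : |b' x - a| ≤ |b' x - β| + |a - β| := by
          have : b' x - a = (b' x - β) + (β - a) := by ring
          rw [this]
          refine (abs_add_le _ _).trans ?_
          rw [abs_sub_comm β a]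
        nlinarith [hω'pos x]
      have hSsubQ : S ⊆ Q := Set.sep_subset _ _
      have hSint : IntegrableOn ω' S volume := (hω'int c r).mono_set hSsubQ
      have h8 : wMeas ω' T ≤ wMeas ω' S :=
        wMeas_mono (fun x => (hω'pos x).le) hSint hsub
      have h9 := hweak' c r hr (l/2) (by positivity)
      calc l * (wMeas ω' T) ^ (1/p)
          ≤ l * (wMeas ω' S) ^ (1/p) := by
            exact mul_le_mul_of_nonneg_left (Real.rpow_le_rpow hT0 h8 (by positivity)) hl.le
        _ = 2 * ((l/2) * (wMeas ω' S) ^ (1/p)) := by ring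
        _ ≤ 2 * (M * wQ ^ (1/p)) := by
            have := h9
            rw [← hβdef, ← hSdef, ← hQdef, ← hwQdef] at this
            linarith
        _ ≤ (2*K*A + 2) * M * wQ ^ (1/p) := by
            nlinarith [mul_nonneg (mul_nonneg (mul_nonneg hK0.le hA0.le) hM.le) hwQp]
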